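/- Let H : S¹ × ℝ^{2n} → ℝ be a weakly asymptotically quadratic Hamiltonian with quadratic part determined by the smooth path A : S¹ → Sym(2n), i.e. sup_t |∇H_t(z) − A_t z| = o(|z|) as |z| → ∞. Assume H is non-degenerate at infinity: the time-1 fundamental matrix M(1) of Ṁ(t) = −J₀A_t M(t), M(0) = I, satisfies det(M(1) − I) ≠ 0. Then there exist constants ν, δ > 0 such that for every continuously differentiable 1-periodic loop x : S¹ → ℝ^{2n}, the L²-norm of the action gradient satisfies ‖ẋ + J₀∇H_·(x)‖_{L²(S¹)} ≥ (ν/2)‖x‖_{L²(S¹)} − δ. -/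

import Mathlib

open scoped RealInnerProductSpace

noncomputable section

/-- The standard symplectic matrix `J₀ = [[0, -Iₙ],[Iₙ, 0]]` on `ℝ^{2n} = ℝ^n ⊕ ℝ^n`. -/
def J0 (n : ℕ) : Matrix (Fin n ⊕ Fin n) (Fin n ⊕ Fin n) ℝ :=
  Matrix.fromBlocks 0 (-1) 1 0

/-- The action of a `2n × 2n` real matrix on euclidean space `ℝ^{2n}`. -/
def mv {n : ℕ} (A : Matrix (Fin n ⊕ Fin n) (Fin n ⊕ Fin n) ℝ)
    (z : EuclideanSpace ℝ (Fin n ⊕ Fin n)) : EuclideanSpace ℝ (Fin n ⊕ Fin n) :=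
  Matrix.toEuclideanLin A z

namespace Stmt3Aux

variable {n : ℕ}

abbrev E (n : ℕ) := EuclideanSpace ℝ (Fin n ⊕ Fin n)
abbrev Mat (n : ℕ) := Matrix (Fin n ⊕ Fin n) (Fin n ⊕ Fin n) ℝ

def clm (B : Mat n) : E n →L[ℝ] E n := Matrix.toEuclideanCLM (𝕜 := ℝ) B

lemma mv_eq_clm (B : Mat n) (z : E n) : mv B z = clm B z := rfl

lemma norm_mv_le (B : Mat n) (z : E n) : ‖mv B z‖ ≤ ‖clm B‖ * ‖z‖ :=
  (clm B).le_opNorm z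

lemma mv_mul (B C : Mat n) (z : E n) : mv (B * C) z = mv B (mv C z) := by
  simp only [mv_eq_clm, clm, map_mul, ContinuousLinearMap.mul_apply]

lemma mv_one (z : E n) : mv (1 : Mat n) z = z := by
  simp only [mv_eq_clm, clm, map_one, ContinuousLinearMap.one_apply]

lemma mv_sub_mat (B C : Mat n) (z : E n) : mv (B - C) z = mv B z - mv C z := by
  simp only [mv_eq_clm, clm, map_sub, ContinuousLinearMap.sub_apply]

lemma mv_sub_vec (B : Mat n) (y z : E n) : mv B (y - z) = mv B y - mv B z := by
  simp only [mv_eq_clm, map_sub]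

lemma mv_neg_mat (B : Mat n) (z : E n) : mv (-B) z = -mv B z := by
  simp only [mv_eq_clm, clm, map_neg, ContinuousLinearMap.neg_apply]

def clmₗ : Mat n →ₗ[ℝ] (E n →L[ℝ] E n) where
  toFun := clm
  map_add' := fun B C => map_add (Matrix.toEuclideanCLM (𝕜 := ℝ)) B C
  map_smul' := fun c B => map_smul (Matrix.toEuclideanCLM (𝕜 := ℝ)) c B

lemma continuous_clm : Continuous (clm : Mat n → (E n →L[ℝ] E n)) :=
  (clmₗ (n := n)).continuous_of_finiteDimensional

def mvappₗ (v : E n) : Mat n →ₗ[ℝ] E n where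
  toFun := fun B => mv B v
  map_add' := fun B C => by
    simp only [mv, map_add, LinearMap.add_apply]
  map_smul' := fun c B => by
    simp only [mv, map_smul, LinearMap.smul_apply, RingHom.id_apply]

lemma hasDerivAt_mv {B : ℝ → Mat n} {B' : Mat n} {t : ℝ}
    (h : ∀ i j, HasDerivAt (fun s => B s i j) (B' i j) t) (v : E n) :
    HasDerivAt (fun s => mv (B s) v) (mv B' v) t := by
  classical
  set vv : (Fin n ⊕ Fin n) → ℝ := WithLp.equiv 2 _ v with hvv
  have hw : HasDerivAt (fun s => Matrix.mulVec (B s) vv) (Matrix.mulVec B' vv) t := by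
    refine hasDerivAt_pi.2 fun i => ?_
    simp only [Matrix.mulVec, dotProduct]
    exact HasDerivAt.fun_sum fun j _ => (h i j).mul_const (vv j)
  have hι := ((EuclideanSpace.equiv (Fin n ⊕ Fin n) ℝ).symm :
      ((Fin n ⊕ Fin n) → ℝ) ≃L[ℝ] E n).toContinuousLinearMap.hasFDerivAt.comp_hasDerivAt t hw
  exact hι

lemma continuous_grad (H : ℝ → E n → ℝ)
    (hH : ContDiff ℝ (⊤ : ℕ∞) fun p : ℝ × E n => H p.1 p.2) :
    Continuous fun p : ℝ × E n => gradient (H p.1) p.2 := by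
  have hd : ∀ p : ℝ × E n, fderiv ℝ (H p.1) p.2 =
      (fderiv ℝ (fun q : ℝ × E n => H q.1 q.2) p).comp
        (ContinuousLinearMap.inr ℝ ℝ (E n)) := by
    intro p
    have h1 : HasFDerivAt (fun q : ℝ × E n => H q.1 q.2)
        (fderiv ℝ (fun q : ℝ × E n => H q.1 q.2) p) p :=
      (hH.differentiable (by simp) p).hasFDerivAt
    have h2 := hasFDerivAt_prodMk_right (𝕜 := ℝ) p.1 p.2
    exact (h1.comp p.2 h2).fderiv
  have : (fun p : ℝ × E n => gradient (H p.1) p.2) = fun p =>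
      (InnerProductSpace.toDual ℝ (E n)).symm
        ((fderiv ℝ (fun q : ℝ × E n => H q.1 q.2) p).comp
          (ContinuousLinearMap.inr ℝ ℝ (E n))) := by
    funext p
    rw [gradient, hd p]
  rw [this]
  exact (InnerProductSpace.toDual ℝ (E n)).symm.continuous.comp
    ((hH.continuous_fderiv (by simp)).clm_comp continuous_const)

lemma int_le_sqrt_int_sq {g : ℝ → ℝ} (hg : Continuous g) :
    ∫ t in (0:ℝ)..1, g t ≤ Real.sqrt (∫ t in (0:ℝ)..1, (g t) ^ 2) := by
  set I := ∫ t in (0:ℝ)..1, (g t) ^ 2 with hI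
  have hI0 : 0 ≤ I := intervalIntegral.integral_nonneg (by norm_num)
    (fun t _ => sq_nonneg _)
  set S := Real.sqrt I with hS
  have hS0 : 0 ≤ S := Real.sqrt_nonneg _
  have hSq : S ^ 2 = I := Real.sq_sqrt hI0
  refine le_of_forall_pos_le_add fun σ hσ => ?_
  have hθ : 0 < S + σ := by linarith
  have hpt : ∀ t ∈ Set.Icc (0:ℝ) 1, g t ≤ (g t) ^ 2 / (2 * (S + σ)) + (S + σ) / 2 := by
    intro t _
    rw [div_add_div _ _ (by linarith : (2:ℝ) * (S + σ) ≠ 0) (by norm_num : (2:ℝ) ≠ 0),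
      le_div_iff₀ (by positivity)]
    nlinarith [sq_nonneg (g t - (S + σ))]
  have h1 : ∫ t in (0:ℝ)..1, g t ≤
      ∫ t in (0:ℝ)..1, ((g t) ^ 2 / (2 * (S + σ)) + (S + σ) / 2) := by
    refine intervalIntegral.integral_mono_on (by norm_num) (hg.intervalIntegrable _ _) ?_ hpt
    exact (((hg.pow 2).div_const _).add continuous_const).intervalIntegrable _ _
  have h2 : (∫ t in (0:ℝ)..1, ((g t) ^ 2 / (2 * (S + σ)) + (S + σ) / 2))
      = I / (2 * (S + σ)) + (S + σ) / 2 := by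
    rw [intervalIntegral.integral_add (f := fun t => g t ^ 2 / (2 * (S + σ))) (((hg.pow 2).div_const _).intervalIntegrable _ _)
      (intervalIntegrable_const), intervalIntegral.integral_div,
      intervalIntegral.integral_const]
    norm_num [hI]
  have h3 : I / (2 * (S + σ)) + (S + σ) / 2 ≤ S + σ := by
    rw [div_add_div _ _ (by linarith : (2 : ℝ) * (S + σ) ≠ 0) (by norm_num : (2:ℝ) ≠ 0),
      div_le_iff₀ (by positivity)]
    nlinarith
  linarith

end Stmt3Aux

open Stmt3Aux Set MeasureTheory intervalIntegral in
/-- If `H` is weakly asymptotically quadratic with quadratic part given by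
the smooth path of symmetric matrices `A`, and `H` is non-degenerate at infinity (the time-1
fundamental matrix `M(1)` of `Ṁ = −J₀A_t M`, `M(0) = I`, has `det(M(1) − I) ≠ 0`), then
there are `ν, δ > 0` so that every `C¹` 1-periodic loop `x : S¹ → ℝ^{2n}` satisfies
`‖ẋ + J₀∇H_·(x)‖_{L²(S¹)} ≥ (ν/2)‖x‖_{L²(S¹)} − δ`. -/
theorem stmt_3 (n : ℕ)
    (H : ℝ → EuclideanSpace ℝ (Fin n ⊕ Fin n) → ℝ)
    (A : ℝ → Matrix (Fin n ⊕ Fin n) (Fin n ⊕ Fin n) ℝ)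
    (hH : ContDiff ℝ (⊤ : ℕ∞) fun p : ℝ × EuclideanSpace ℝ (Fin n ⊕ Fin n) => H p.1 p.2)
    (hHper : ∀ t z, H (t + 1) z = H t z)
    (hA : ∀ i j, ContDiff ℝ (⊤ : ℕ∞) fun t => A t i j)
    (hAper : ∀ t, A (t + 1) = A t)
    (hAsymm : ∀ t, (A t).IsSymm)
    (hsub : ∀ ε > (0 : ℝ), ∃ M > (0 : ℝ), ∀ z : EuclideanSpace ℝ (Fin n ⊕ Fin n),
      M < ‖z‖ → ∀ t : ℝ, ‖gradient (H t) z - mv (A t) z‖ ≤ ε * ‖z‖)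
    (M : ℝ → Matrix (Fin n ⊕ Fin n) (Fin n ⊕ Fin n) ℝ)
    (hM0 : M 0 = 1)
    (hMode : ∀ t ∈ Set.Icc (0 : ℝ) 1, ∀ i j, HasDerivWithinAt (fun s => M s i j)
      ((-(J0 n) * A t * M t) i j) (Set.Icc (0 : ℝ) 1) t)
    (hndg : (M 1 - 1).det ≠ 0) :
    ∃ ν > (0 : ℝ), ∃ δ > (0 : ℝ),
      ∀ x : ℝ → EuclideanSpace ℝ (Fin n ⊕ Fin n),
        ContDiff ℝ 1 x → (∀ t, x (t + 1) = x t) →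
        (ν / 2) * Real.sqrt (∫ t in (0:ℝ)..1, ‖x t‖ ^ 2) - δ ≤
          Real.sqrt (∫ t in (0:ℝ)..1,
            ‖deriv x t + mv (J0 n) (gradient (H t) (x t))‖ ^ 2) := by
  classical
  have hGc : Continuous fun p : ℝ × E n => gradient (H p.1) p.2 := continuous_grad H hH
  have hAc : Continuous A := continuous_pi fun i => continuous_pi fun j => (hA i j).continuous
  -- bound K for J0 * A t on [0,1]
  have hJAc : Continuous fun t => clm (J0 n * A t) :=
    continuous_clm.comp (continuous_const.matrix_mul hAc)
  obtain ⟨K₀, hK₀⟩ := (isCompact_Icc (a := (0:ℝ)) (b := 1)).exists_bound_of_continuousOn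
    hJAc.continuousOn
  obtain ⟨K, hKdef⟩ : ∃ c : ℝ, c = max K₀ 1 := ⟨_, rfl⟩
  have hK1 : (1:ℝ) ≤ K := by rw [hKdef]; exact le_max_right _ _
  have hKpos : (0:ℝ) < K := lt_of_lt_of_le one_pos hK1
  have hKb : ∀ t ∈ Icc (0:ℝ) 1, ∀ w : E n, ‖mv (J0 n) (mv (A t) w)‖ ≤ K * ‖w‖ := by
    intro t ht w
    rw [← mv_mul]
    refine (norm_mv_le _ _).trans
      (mul_le_mul_of_nonneg_right ?_ (norm_nonneg _))
    rw [hKdef]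
    exact (hK₀ t ht).trans (le_max_left _ _)
  -- M is continuous on [0,1]
  have hMcont : ∀ i j, ContinuousOn (fun s => M s i j) (Icc 0 1) :=
    fun i j t ht => (hMode t ht i j).continuousWithinAt
  have hMmat : ContinuousOn M (Icc 0 1) :=
    continuousOn_pi.2 fun i => continuousOn_pi.2 fun j => hMcont i j
  obtain ⟨CM₀, hCM₀⟩ := (isCompact_Icc (a := (0:ℝ)) (b := 1)).exists_bound_of_continuousOn
    (continuous_clm.comp_continuousOn hMmat)
  obtain ⟨CM, hCMdef⟩ : ∃ c : ℝ, c = max CM₀ 0 := ⟨_, rfl⟩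
  have hCM0 : (0:ℝ) ≤ CM := by rw [hCMdef]; exact le_max_right _ _
  have hCMb : ∀ t ∈ Icc (0:ℝ) 1, ∀ w : E n, ‖mv (M t) w‖ ≤ CM * ‖w‖ := by
    intro t ht w
    refine (norm_mv_le _ _).trans
      (mul_le_mul_of_nonneg_right ?_ (norm_nonneg _))
    rw [hCMdef]
    exact (hCM₀ t ht).trans (le_max_left _ _)
  -- the inverse of 1 - M 1
  set B1 : Mat n := 1 - M 1 with hB1def
  have hdet : IsUnit B1.det := by
    have hB1' : B1 = -(M 1 - 1) := by rw [hB1def, neg_sub]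
    rw [hB1', Matrix.det_neg]
    exact (isUnit_iff_ne_zero.2 (mul_ne_zero (pow_ne_zero _ (by norm_num)) hndg))
  obtain ⟨Cinv, hCinvdef⟩ : ∃ c : ℝ, c = ‖clm (B1⁻¹)‖ := ⟨_, rfl⟩
  have hCinv0 : (0:ℝ) ≤ Cinv := by rw [hCinvdef]; exact norm_nonneg _
  have hx0inv : ∀ w : E n, ‖w‖ ≤ Cinv * ‖mv B1 w‖ := by
    intro w
    have hw : w = mv B1⁻¹ (mv B1 w) := by
      rw [← mv_mul, Matrix.nonsing_inv_mul _ hdet, mv_one]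
    rw [hCinvdef]
    nth_rewrite 1 [hw]
    exact norm_mv_le _ _
  obtain ⟨CK, hCKdef⟩ : ∃ c : ℝ, c = Real.exp K := ⟨_, rfl⟩
  have hCK1 : (1:ℝ) ≤ CK := by rw [hCKdef]; exact Real.one_le_exp (le_of_lt hKpos)
  obtain ⟨C₀, hC₀def⟩ : ∃ c : ℝ, c = (1 + CM * Cinv) * CK := ⟨_, rfl⟩
  have hC₀1 : (1:ℝ) ≤ C₀ := by
    rw [hC₀def]
    nlinarith [mul_nonneg hCM0 hCinv0, hCK1]
  have hC₀pos : (0:ℝ) < C₀ := by linarith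
  obtain ⟨CJ, hCJdef⟩ : ∃ c : ℝ, c = ‖clm (J0 n)‖ + 1 := ⟨_, rfl⟩
  have hCJpos : (0:ℝ) < CJ := by
    rw [hCJdef]
    exact lt_of_lt_of_le one_pos (le_add_of_nonneg_left (norm_nonneg _))
  obtain ⟨ε, hεdef⟩ : ∃ c : ℝ, c = 1 / (2 * C₀ * CJ) := ⟨_, rfl⟩
  have hεpos : (0:ℝ) < ε := by
    rw [hεdef]
    exact one_div_pos.2 (mul_pos (mul_pos two_pos hC₀pos) hCJpos)
  obtain ⟨Mε, hMεpos, hMε⟩ := hsub ε hεpos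
  -- the bound on the compact part
  have hsubc : Continuous fun p : ℝ × E n => gradient (H p.1) p.2 - mv (A p.1) p.2 := by
    simp only [mv_eq_clm]
    exact hGc.sub ((continuous_clm.comp (hAc.comp continuous_fst)).clm_apply continuous_snd)
  obtain ⟨Cb, hCb⟩ := ((isCompact_Icc (a := (0:ℝ)) (b := 1)).prod
      (isCompact_closedBall (0 : E n) Mε)).exists_bound_of_continuousOn hsubc.continuousOn
  obtain ⟨Cε, hCεdef⟩ : ∃ c : ℝ, c = max Cb 0 := ⟨_, rfl⟩
  have hCε0 : (0:ℝ) ≤ Cε := by rw [hCεdef]; exact le_max_right _ _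
  have hptb : ∀ t ∈ Icc (0:ℝ) 1, ∀ z : E n,
      ‖gradient (H t) z - mv (A t) z‖ ≤ ε * ‖z‖ + Cε := by
    intro t ht z
    by_cases hz : ‖z‖ ≤ Mε
    · have hmem : ((t, z) : ℝ × E n) ∈ Icc (0:ℝ) 1 ×ˢ Metric.closedBall (0 : E n) Mε :=
        ⟨ht, by simpa [Metric.mem_closedBall, dist_zero_right] using hz⟩
      have h1 := hCb (t, z) hmem
      have h2 : (0:ℝ) ≤ ε * ‖z‖ := mul_nonneg (le_of_lt hεpos) (norm_nonneg z)
      have h3 : Cb ≤ Cε := by rw [hCεdef]; exact le_max_left _ _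
      have h4 : ‖gradient (H t) z - mv (A t) z‖ ≤ Cb := h1
      linarith
    · exact (hMε z (not_le.1 hz) t).trans (le_add_of_nonneg_right hCε0)
  refine ⟨1 / C₀, one_div_pos.2 hC₀pos, CJ * Cε + 1,
    by linarith [mul_nonneg (le_of_lt hCJpos) hCε0], ?_⟩
  intro x hx hxper
  -- basic facts about the loop x
  have hxc : Continuous x := hx.continuous
  have hxd : ∀ t, HasDerivAt x (deriv x t) t :=
    fun t => (hx.differentiable one_ne_zero t).hasDerivAt
  have hx'c : Continuous (deriv x) := hx.continuous_deriv le_rfl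
  set u : ℝ → E n := fun t => deriv x t + mv (J0 n) (mv (A t) (x t)) with hudef
  have hmvAx : Continuous fun t => mv (A t) (x t) := by
    simp only [mv_eq_clm]
    exact (continuous_clm.comp hAc).clm_apply hxc
  have huc : Continuous u := by
    rw [hudef]
    simp only [mv_eq_clm]
    exact hx'c.add ((clm (J0 n)).continuous.comp (by simpa only [mv_eq_clm] using hmvAx))
  set f : ℝ → E n := fun t => deriv x t + mv (J0 n) (gradient (H t) (x t)) with hfdef
  have hgxc : Continuous fun t => gradient (H t) (x t) :=
    hGc.comp (continuous_id.prodMk hxc)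
  have hfc : Continuous f := by
    rw [hfdef]
    simp only [mv_eq_clm]
    exact hx'c.add ((clm (J0 n)).continuous.comp hgxc)
  -- the clamped fundamental solution
  set τ : ℝ → ℝ := fun t => max 0 (min 1 t) with hτdef
  have hτc : Continuous τ := continuous_const.max (continuous_const.min continuous_id)
  have hτmem : ∀ t, τ t ∈ Icc (0:ℝ) 1 :=
    fun t => ⟨le_max_left _ _, max_le zero_le_one (min_le_left _ _)⟩
  have hτid : ∀ t ∈ Icc (0:ℝ) 1, τ t = t := by
    intro t ht
    simp only [hτdef]
    rw [min_eq_right ht.2, max_eq_right ht.1]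
  set m : ℝ → E n := fun t => mv (M (τ t)) (x 0) with hmdef
  have hmc : Continuous m := by
    have hcomp : Continuous fun t => M (τ t) := hMmat.comp_continuous hτc hτmem
    rw [hmdef]
    simp only [mv_eq_clm]
    exact (continuous_clm.comp hcomp).clm_apply continuous_const
  set e : ℝ → E n := fun t => x t - m t with hedef
  have hec : Continuous e := hxc.sub hmc
  have hτ0 : τ 0 = 0 := hτid 0 ⟨le_refl _, zero_le_one⟩
  have hτ1 : τ 1 = 1 := hτid 1 ⟨zero_le_one, le_refl _⟩
  have he0 : e 0 = 0 := by
    simp only [hedef, hmdef, hτ0, hM0, mv_one, sub_self]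
  have hx1 : x 1 = x 0 := by simpa using hxper 0
  have he1 : e 1 = mv B1 (x 0) := by
    show x 1 - mv (M (τ 1)) (x 0) = mv B1 (x 0)
    rw [hτ1, hx1, hB1def, mv_sub_mat, mv_one]
  set D : ℝ → E n := fun t => u t - mv (J0 n) (mv (A t) (e t)) with hDdef
  have hDc : Continuous D := by
    rw [hDdef]
    simp only [mv_eq_clm]
    exact huc.sub ((clm (J0 n)).continuous.comp ((continuous_clm.comp hAc).clm_apply hec))
  have heD : ∀ s ∈ Ioo (0:ℝ) 1, HasDerivAt e (D s) s := by
    intro s hs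
    have hsIcc : s ∈ Icc (0:ℝ) 1 := Ioo_subset_Icc_self hs
    have hnhds : Icc (0:ℝ) 1 ∈ nhds s := Icc_mem_nhds hs.1 hs.2
    have hMd : HasDerivAt (fun tt => mv (M tt) (x 0)) (mv (-(J0 n) * A s * M s) (x 0)) s :=
      hasDerivAt_mv (fun i j => (hMode s hsIcc i j).hasDerivAt hnhds) (x 0)
    have hmd : HasDerivAt m (mv (-(J0 n) * A s * M s) (x 0)) s := by
      refine hMd.congr_of_eventuallyEq ?_
      filter_upwards [hnhds] with tt htt
      show mv (M (τ tt)) (x 0) = mv (M tt) (x 0)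
      rw [hτid tt htt]
    have hsum : HasDerivAt e (deriv x s - mv (-(J0 n) * A s * M s) (x 0)) s :=
      (hxd s).sub hmd
    convert hsum using 1
    have hms : m s = mv (M s) (x 0) := by
      show mv (M (τ s)) (x 0) = mv (M s) (x 0)
      rw [hτid s hsIcc]
    have h1 : mv (-(J0 n) * A s * M s) (x 0) = -(mv (J0 n) (mv (A s) (m s))) := by
      rw [hms, ← mv_mul, ← mv_mul, ← mv_neg_mat]
      congr 1
      rw [Matrix.neg_mul, Matrix.neg_mul, Matrix.mul_assoc]
    show u s - mv (J0 n) (mv (A s) (e s)) = _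
    have h2 : e s = x s - m s := rfl
    rw [h2, mv_sub_vec (A s), mv_sub_vec (J0 n), h1]
    show deriv x s + mv (J0 n) (mv (A s) (x s)) - _ = _
    abel
  -- the fundamental theorem of calculus for e
  have hFTC : ∀ t ∈ Icc (0:ℝ) 1, e t = ∫ s in (0:ℝ)..t, D s := by
    intro t ht
    rcases eq_or_lt_of_le ht.1 with h0 | h0
    · rw [← h0]
      simp [he0]
    · have hI := intervalIntegral.integral_eq_sub_of_hasDeriv_right_of_le (le_of_lt h0)
        (hec.continuousOn)
        (fun s hs => (heD s ⟨hs.1, lt_of_lt_of_le hs.2 ht.2⟩).hasDerivWithinAt)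
        (hDc.intervalIntegrable _ _)
      rw [he0, sub_zero] at hI
      exact hI.symm
  obtain ⟨W1, hW1def⟩ : ∃ c : ℝ, c = ∫ s in (0:ℝ)..1, ‖u s‖ := ⟨_, rfl⟩
  have hW1nn : 0 ≤ W1 := by
    rw [hW1def]
    exact intervalIntegral.integral_nonneg zero_le_one (fun s _ => norm_nonneg _)
  set gg : ℝ → ℝ := fun s => K * ‖e s‖ + ‖u s‖ with hggdef
  have hggc : Continuous gg := (continuous_const.mul hec.norm).add huc.norm
  set Ef : ℝ → ℝ := fun t => ∫ s in (0:ℝ)..t, gg s with hEfdef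
  have hEfd : ∀ t, HasDerivAt Ef (gg t) t := fun t =>
    intervalIntegral.integral_hasDerivAt_right (hggc.intervalIntegrable _ _)
      hggc.stronglyMeasurable.stronglyMeasurableAtFilter hggc.continuousAt
  have hψE : ∀ t ∈ Icc (0:ℝ) 1, ‖e t‖ ≤ Ef t := by
    intro t ht
    rw [hFTC t ht]
    refine (intervalIntegral.norm_integral_le_integral_norm ht.1).trans ?_
    refine intervalIntegral.integral_mono_on ht.1 (hDc.norm.intervalIntegrable _ _)
      (hggc.intervalIntegrable _ _) ?_
    intro s hs
    have hsI : s ∈ Icc (0:ℝ) 1 := ⟨hs.1, hs.2.trans ht.2⟩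
    have hb := hKb s hsI (e s)
    calc ‖D s‖ ≤ ‖u s‖ + ‖mv (J0 n) (mv (A s) (e s))‖ := norm_sub_le _ _
      _ ≤ K * ‖e s‖ + ‖u s‖ := by linarith only [hb]
  set V : ℝ → ℝ := fun t => ∫ s in (0:ℝ)..t, Real.exp (-K * s) * ‖u s‖ with hVdef
  have hVintc : Continuous fun s => Real.exp (-K * s) * ‖u s‖ :=
    (Real.continuous_exp.comp (continuous_const.mul continuous_id)).mul huc.norm
  have hVd : ∀ t, HasDerivAt V (Real.exp (-K * t) * ‖u t‖) t := fun t =>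
    intervalIntegral.integral_hasDerivAt_right (hVintc.intervalIntegrable _ _)
      hVintc.stronglyMeasurable.stronglyMeasurableAtFilter hVintc.continuousAt
  set R : ℝ → ℝ := fun t => Real.exp (-K * t) * Ef t - V t with hRdef
  have hRd : ∀ t, HasDerivAt R (Real.exp (-K * t) * K * (‖e t‖ - Ef t)) t := by
    intro t
    have h1 : HasDerivAt (fun s => Real.exp (-K * s)) (-K * Real.exp (-K * t)) t := by
      have h0 : HasDerivAt (fun s : ℝ => -K * s) (-K) t := by
        simpa using (hasDerivAt_id t).const_mul (-K)
      simpa [mul_comm] using h0.exp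
    have h2 := (h1.mul (hEfd t)).sub (hVd t)
    have h3 : Real.exp (-K * t) * K * (‖e t‖ - Ef t) = -K * Real.exp (-K * t) * Ef t +
        Real.exp (-K * t) * gg t - Real.exp (-K * t) * ‖u t‖ := by
      simp only [hggdef]
      ring
    rw [h3]
    exact h2
  have hRanti : AntitoneOn R (Icc (0:ℝ) 1) := by
    refine antitoneOn_of_deriv_nonpos (convex_Icc _ _) ?_ ?_ ?_
    · exact (Continuous.sub ((Real.continuous_exp.comp
        (continuous_const.mul continuous_id)).mul
        (continuous_iff_continuousAt.2 fun t => (hEfd t).continuousAt))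
        (continuous_iff_continuousAt.2 fun t => (hVd t).continuousAt)).continuousOn
    · intro s hs
      exact (hRd s).differentiableAt.differentiableWithinAt
    · intro s hs
      rw [interior_Icc] at hs
      rw [(hRd s).deriv]
      have h := hψE s (Ioo_subset_Icc_self hs)
      have hexp : 0 < Real.exp (-K * s) := Real.exp_pos _
      have hd : ‖e s‖ - Ef s ≤ 0 := by linarith
      exact mul_nonpos_iff.2 (Or.inl ⟨(mul_pos hexp hKpos).le, hd⟩)
  have hEfb : ∀ t ∈ Icc (0:ℝ) 1, Ef t ≤ CK * W1 := by
    intro t ht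
    have hRle : R t ≤ R 0 := hRanti (left_mem_Icc.2 zero_le_one) ht ht.1
    have hR0 : R 0 = 0 := by
      simp [hRdef, hEfdef, hVdef, intervalIntegral.integral_same]
    have hVt1 : V t ≤ ∫ s in (0:ℝ)..t, ‖u s‖ := by
      refine intervalIntegral.integral_mono_on ht.1 (hVintc.intervalIntegrable _ _)
        (huc.norm.intervalIntegrable _ _) ?_
      intro s hs
      have h1 : Real.exp (-K * s) ≤ 1 := by
        rw [Real.exp_le_one_iff, neg_mul]
        exact neg_nonpos.2 (mul_nonneg (le_of_lt hKpos) hs.1)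
      exact mul_le_of_le_one_left (norm_nonneg _) h1
    have hW : (∫ s in (0:ℝ)..t, ‖u s‖) ≤ W1 := by
      rw [hW1def, ← intervalIntegral.integral_add_adjacent_intervals
        (huc.norm.intervalIntegrable 0 t) (huc.norm.intervalIntegrable t 1)]
      have h2 : 0 ≤ ∫ s in t..1, ‖u s‖ :=
        intervalIntegral.integral_nonneg ht.2 (fun _ _ => norm_nonneg _)
      linarith only [h2]
    have hexp : Real.exp (-K * t) * Ef t ≤ V t := by
      have h0 : R t ≤ 0 := by rw [← hR0]; exact hRle
      simp only [hRdef] at h0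
      linarith only [h0]
    have hcan : Real.exp (K * t) * Real.exp (-K * t) = 1 := by
      rw [← Real.exp_add]
      ring_nf
      exact Real.exp_zero
    have h1 : Ef t ≤ Real.exp (K * t) * V t := by
      have h3 := mul_le_mul_of_nonneg_left hexp (le_of_lt (Real.exp_pos (K * t)))
      rw [← mul_assoc, hcan, one_mul] at h3
      exact h3
    have h2 : Real.exp (K * t) ≤ CK := by
      rw [hCKdef]
      exact Real.exp_le_exp.2 (by simpa using mul_le_mul_of_nonneg_left ht.2 (le_of_lt hKpos))
    have hVnn : 0 ≤ V t :=
      intervalIntegral.integral_nonneg ht.1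
      (fun s _ => mul_nonneg (le_of_lt (Real.exp_pos _)) (norm_nonneg _))
    calc Ef t ≤ Real.exp (K * t) * V t := h1
      _ ≤ CK * W1 := mul_le_mul h2 (hVt1.trans hW) hVnn (le_trans zero_le_one hCK1)
  have hψb : ∀ t ∈ Icc (0:ℝ) 1, ‖e t‖ ≤ CK * W1 :=
    fun t ht => (hψE t ht).trans (hEfb t ht)
  have hx0b : ‖x 0‖ ≤ Cinv * (CK * W1) := by
    have h1 := hx0inv (x 0)
    rw [← he1] at h1
    exact h1.trans (mul_le_mul_of_nonneg_left
      (hψb 1 (right_mem_Icc.2 zero_le_one)) hCinv0)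
  have hxb : ∀ t ∈ Icc (0:ℝ) 1, ‖x t‖ ≤ C₀ * W1 := by
    intro t ht
    have h1 : ‖x t‖ ≤ ‖e t‖ + ‖m t‖ := by
      have hxe : x t = e t + m t := by simp [hedef]
      rw [hxe]
      exact norm_add_le _ _
    have h2 : ‖m t‖ ≤ CM * ‖x 0‖ := hCMb (τ t) (hτmem t) (x 0)
    have h3 := hψb t ht
    have h4 := mul_le_mul_of_nonneg_left hx0b hCM0
    rw [hC₀def]
    have h5 : ‖m t‖ ≤ CM * (Cinv * (CK * W1)) := h2.trans h4
    linarith only [h1, h3, h5]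
  -- putting it together
  obtain ⟨X, hXdef⟩ : ∃ c : ℝ, c = Real.sqrt (∫ t in (0:ℝ)..1, ‖x t‖ ^ 2) := ⟨_, rfl⟩
  have hXnn : 0 ≤ X := by rw [hXdef]; exact Real.sqrt_nonneg _
  obtain ⟨F, hFdef⟩ : ∃ c : ℝ, c = Real.sqrt (∫ t in (0:ℝ)..1,
      ‖deriv x t + mv (J0 n) (gradient (H t) (x t))‖ ^ 2) := ⟨_, rfl⟩
  have hFnn : 0 ≤ F := by rw [hFdef]; exact Real.sqrt_nonneg _
  have hintf : (∫ s in (0:ℝ)..1, ‖f s‖) ≤ F := by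
    rw [hFdef]
    exact int_le_sqrt_int_sq hfc.norm
  have hintx : (∫ s in (0:ℝ)..1, ‖x s‖) ≤ X := by
    rw [hXdef]
    exact int_le_sqrt_int_sq hxc.norm
  have hW1b : W1 ≤ (∫ s in (0:ℝ)..1, ‖f s‖) + CJ * ε * (∫ s in (0:ℝ)..1, ‖x s‖)
      + CJ * Cε := by
    have hpt : ∀ s ∈ Icc (0:ℝ) 1,
        ‖u s‖ ≤ ‖f s‖ + (CJ * ε * ‖x s‖ + CJ * Cε) := by
      intro s hs
      have hdiff : u s - f s = mv (J0 n) (mv (A s) (x s) - gradient (H s) (x s)) := by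
        show deriv x s + mv (J0 n) (mv (A s) (x s)) -
          (deriv x s + mv (J0 n) (gradient (H s) (x s))) = _
        rw [mv_sub_vec (J0 n)]
        abel
      have hgb : ‖mv (A s) (x s) - gradient (H s) (x s)‖ ≤ ε * ‖x s‖ + Cε := by
        rw [norm_sub_rev]
        exact hptb s hs (x s)
      have hub : ‖u s - f s‖ ≤ CJ * (ε * ‖x s‖ + Cε) := by
        rw [hdiff]
        refine (norm_mv_le _ _).trans ?_
        have hJle : ‖clm (J0 n)‖ ≤ CJ := by rw [hCJdef]; linarith only []
        exact mul_le_mul hJle hgb (norm_nonneg _) (le_of_lt hCJpos)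
      have htr : ‖u s‖ - ‖f s‖ ≤ ‖u s - f s‖ := norm_sub_norm_le _ _
      have hexp : CJ * (ε * ‖x s‖ + Cε) = CJ * ε * ‖x s‖ + CJ * Cε := by ring
      linarith only [htr, hub, hexp]
    have hmono := intervalIntegral.integral_mono_on (μ := MeasureTheory.volume)
      (g := fun s => ‖f s‖ + (CJ * ε * ‖x s‖ + CJ * Cε)) zero_le_one
      (huc.norm.intervalIntegrable 0 1)
      ((hfc.norm.add ((continuous_const.mul hxc.norm).add continuous_const)).intervalIntegrable
        0 1) hpt
    have heq : (∫ s in (0:ℝ)..1, (‖f s‖ + (CJ * ε * ‖x s‖ + CJ * Cε)))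
        = (∫ s in (0:ℝ)..1, ‖f s‖) + (CJ * ε * (∫ s in (0:ℝ)..1, ‖x s‖) + CJ * Cε) := by
      rw [intervalIntegral.integral_add (f := fun s => ‖f s‖)
        (g := fun s => CJ * ε * ‖x s‖ + CJ * Cε) (hfc.norm.intervalIntegrable _ _)
        (((continuous_const.mul hxc.norm).add continuous_const).intervalIntegrable _ _),
        intervalIntegral.integral_add (f := fun s => CJ * ε * ‖x s‖)
        (g := fun _ => CJ * Cε) ((continuous_const.mul hxc.norm).intervalIntegrable _ _)
        intervalIntegrable_const,
        intervalIntegral.integral_const_mul, intervalIntegral.integral_const]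
      norm_num
    rw [heq] at hmono
    linarith
  have hXb : X ≤ C₀ * W1 := by
    have hsq : ∀ t ∈ Icc (0:ℝ) 1, ‖x t‖ ^ 2 ≤ (C₀ * W1) ^ 2 :=
      fun t ht => pow_le_pow_left₀ (norm_nonneg (x t)) (hxb t ht) 2
    have h1 : (∫ t in (0:ℝ)..1, ‖x t‖ ^ 2) ≤ (C₀ * W1) ^ 2 := by
      have h2 := intervalIntegral.integral_mono_on (μ := MeasureTheory.volume) zero_le_one
        ((hxc.norm.pow 2).intervalIntegrable 0 1) intervalIntegrable_const hsq
      simpa using h2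
    rw [hXdef]
    refine (Real.sqrt_le_sqrt h1).trans ?_
    rw [Real.sqrt_sq (mul_nonneg (le_of_lt hC₀pos) hW1nn)]
  have hCε2 : C₀ * (CJ * ε) = 1 / 2 := by
    rw [hεdef]
    field_simp
  have hchain : X ≤ C₀ * F + (1 / 2) * X + C₀ * (CJ * Cε) := by
    have h1 := mul_le_mul_of_nonneg_left hW1b (le_of_lt hC₀pos)
    have h2 := mul_le_mul_of_nonneg_left hintf (le_of_lt hC₀pos)
    have h3 := mul_le_mul_of_nonneg_left hintx
      (mul_nonneg (le_of_lt hC₀pos) (mul_nonneg (le_of_lt hCJpos) (le_of_lt hεpos)))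
    have hq : C₀ * (CJ * ε) * (∫ s in (0:ℝ)..1, ‖x s‖)
        = 1 / 2 * (∫ s in (0:ℝ)..1, ‖x s‖) := by rw [hCε2]
    have hq2 : C₀ * (CJ * ε) * X = 1 / 2 * X := by rw [hCε2]
    linarith only [h1, h2, h3, hq, hq2, hXb]
  have hfinal : 1 / C₀ / 2 * X - (CJ * Cε + 1) ≤ F := by
    have h4 : X ≤ 2 * C₀ * F + 2 * C₀ * (CJ * Cε) := by linarith only [hchain]
    have h5 : 1 / C₀ / 2 * X ≤ F + CJ * Cε := by
      rw [div_div, div_mul_eq_mul_div, div_le_iff₀ (by linarith only [hC₀pos] : (0:ℝ) < C₀ * 2)]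
      linarith only [h4]
    linarith only [h5]
  rw [← hXdef, ← hFdef]
  exact hfinal
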